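/- arXiv:1112.5634 — 4 statements merged into one kernel-verified Lean document; each statement's English description precedes it below -/
import Mathlib

section
/- For all b, b' > -1/2, the integral over (0,1] of (√(2b+1)·t^b − √(2b'+1)·t^{b'})² dt equals 4(b−b')² / ((1+b+b')(√(2b+1)+√(2b'+1))²). -/
open MeasureTheory Real

theorem stmt_0 (b b' : ℝ) (hb : -1/2 < b) (hb' : -1/2 < b') :
    ∫ t in Set.Ioc (0:ℝ) 1,
      (Real.sqrt (2*b+1) * t ^ b - Real.sqrt (2*b'+1) * t ^ b') ^ 2
      = 4 * (b - b') ^ 2 /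
        ((1 + b + b') * (Real.sqrt (2*b+1) + Real.sqrt (2*b'+1)) ^ 2) := by
  have hb1 : (0:ℝ) < 2*b+1 := by linarith
  have hb1' : (0:ℝ) < 2*b'+1 := by linarith
  set a := Real.sqrt (2*b+1) with ha
  set a' := Real.sqrt (2*b'+1) with ha'
  have ha2 : a^2 = 2*b+1 := Real.sq_sqrt hb1.le
  have ha2' : a'^2 = 2*b'+1 := Real.sq_sqrt hb1'.le
  have hapos : 0 < a := Real.sqrt_pos.mpr hb1
  have hapos' : 0 < a' := Real.sqrt_pos.mpr hb1'
  have key : ∀ r : ℝ, -1 < r → ∫ t in Set.Ioc (0:ℝ) 1, t ^ r = 1/(r+1) := by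
    intro r hr
    rw [← intervalIntegral.integral_of_le zero_le_one, integral_rpow (Or.inl hr),
      Real.zero_rpow (by linarith), Real.one_rpow]
    ring
  have hint : ∀ r : ℝ, -1 < r → IntegrableOn (fun t : ℝ => t ^ r) (Set.Ioc 0 1) := by
    intro r hr
    exact (intervalIntegrable_iff_integrableOn_Ioc_of_le zero_le_one).mp
      (intervalIntegral.intervalIntegrable_rpow' hr)
  have hrb : (-1:ℝ) < 2*b := by linarith
  have hrb' : (-1:ℝ) < 2*b' := by linarith
  have hrbb : (-1:ℝ) < b + b' := by linarith
  have hcongr : ∫ t in Set.Ioc (0:ℝ) 1, (a * t ^ b - a' * t ^ b') ^ 2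
      = ∫ t in Set.Ioc (0:ℝ) 1,
        (a^2 * t ^ (2*b) + a'^2 * t ^ (2*b') - 2*a*a' * t ^ (b+b')) := by
    refine setIntegral_congr_fun measurableSet_Ioc (fun t ht => ?_)
    have ht0 : 0 < t := ht.1
    have h1 : t ^ (2*b) = t ^ b * t ^ b := by
      rw [← Real.rpow_add ht0]; ring_nf
    have h2 : t ^ (2*b') = t ^ b' * t ^ b' := by
      rw [← Real.rpow_add ht0]; ring_nf
    have h3 : t ^ (b+b') = t ^ b * t ^ b' := Real.rpow_add ht0 b b'
    rw [h1, h2, h3]; ring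
  rw [hcongr]
  have i1 : IntegrableOn (fun t : ℝ => a^2 * t ^ (2*b)) (Set.Ioc 0 1) :=
    (hint _ hrb).const_mul _
  have i2 : IntegrableOn (fun t : ℝ => a'^2 * t ^ (2*b')) (Set.Ioc 0 1) :=
    (hint _ hrb').const_mul _
  have i3 : IntegrableOn (fun t : ℝ => 2*a*a' * t ^ (b+b')) (Set.Ioc 0 1) :=
    (hint _ hrbb).const_mul _
  have hsub := integral_sub (i1.add i2) i3
  simp only [Pi.add_apply] at hsub
  rw [hsub, integral_add i1 i2, integral_const_mul, integral_const_mul, integral_const_mul,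
    key _ hrb, key _ hrb', key _ hrbb]
  have hs : (0:ℝ) < b + b' + 1 := by linarith
  have hsum : 0 < a + a' := by linarith
  have hb_eq : b = (a^2-1)/2 := by linarith
  have hb'_eq : b' = (a'^2-1)/2 := by linarith
  have hkey : (2*(b+b'+1) - 2*a*a') * ((a+a')^2) = 4*(b-b')^2 := by
    rw [hb_eq, hb'_eq]; ring
  have e1 : a^2 * (1/(2*b+1)) = 1 := by
    rw [ha2]; field_simp
  have e2 : a'^2 * (1/(2*b'+1)) = 1 := by
    rw [ha2']; field_simp
  have lhs_eq : a^2 * (1/(2*b+1)) + a'^2 * (1/(2*b'+1)) - 2*a*a' * (1/(b+b'+1))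
      = (2*(b+b'+1) - 2*a*a') / (b+b'+1) := by
    rw [e1, e2, eq_div_iff hs.ne', sub_mul, mul_assoc, one_div, inv_mul_cancel₀ hs.ne',
      mul_one]
    ring
  have hden : (1 + b + b') * (a + a') ^ 2 ≠ 0 :=
    (mul_pos (by linarith : (0:ℝ) < 1 + b + b') (by positivity)).ne'
  rw [lhs_eq, div_eq_div_iff hs.ne' hden]
  linear_combination (b + b' + 1) * hkey
end

section
/- For all b, b' > -1/2, (b−b')²/(1+2·max(b,b'))² ≤ ∫₀¹ (√(2b+1)·t^b − √(2b'+1)·t^{b'})² dt ≤ (b−b')²/(1+2·min(b,b'))². -/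
open MeasureTheory Real

lemma int_rpow_val (c : ℝ) (hc : -1 < c) :
    ∫ t in Set.Ioc (0:ℝ) 1, t ^ c = 1/(c+1) := by
  rw [← intervalIntegral.integral_of_le zero_le_one, integral_rpow (Or.inl hc),
    Real.one_rpow, Real.zero_rpow (by linarith)]
  ring

lemma int_rpow_integ (c : ℝ) (hc : -1 < c) :
    MeasureTheory.IntegrableOn (fun t : ℝ => t ^ c) (Set.Ioc 0 1) := by
  rw [← intervalIntegrable_iff_integrableOn_Ioc_of_le zero_le_one]
  exact intervalIntegral.intervalIntegrable_rpow' hc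

lemma ineq_both (A B : ℝ) (hApos : 0 < A) (hABle : A ≤ B) :
    ((A^2-B^2)/2)^2/(B^2)^2 ≤ 2*(A-B)^2/(A^2+B^2) ∧
    2*(A-B)^2/(A^2+B^2) ≤ ((A^2-B^2)/2)^2/(A^2)^2 := by
  have hBpos : 0 < B := lt_of_lt_of_le hApos hABle
  constructor
  · rw [div_le_div_iff₀ (by positivity) (by positivity)]
    have hf1 : (A+B)^2 ≤ 4*B^2 := by nlinarith
    have hf2 : A^2+B^2 ≤ 2*B^2 := by nlinarith
    have h1 : (A-B)^2*(A+B)^2 ≤ (A-B)^2*(4*B^2) :=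
      mul_le_mul_of_nonneg_left hf1 (sq_nonneg _)
    have h2 : (A-B)^2*(A+B)^2*(A^2+B^2) ≤ (A-B)^2*(4*B^2)*(A^2+B^2) :=
      mul_le_mul_of_nonneg_right h1 (by positivity)
    have h3 : (A-B)^2*(4*B^2)*(A^2+B^2) ≤ (A-B)^2*(4*B^2)*(2*B^2) :=
      mul_le_mul_of_nonneg_left hf2 (by positivity)
    nlinarith [h2, h3]
  · rw [div_le_div_iff₀ (by positivity) (by positivity)]
    have hf1 : 4*A^2 ≤ (A+B)^2 := by nlinarith
    have hf2 : 2*A^2 ≤ A^2+B^2 := by nlinarith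
    have h1 : (A-B)^2*(4*A^2) ≤ (A-B)^2*(A+B)^2 :=
      mul_le_mul_of_nonneg_left hf1 (sq_nonneg _)
    have h2 : (A-B)^2*(4*A^2)*(2*A^2) ≤ (A-B)^2*(A+B)^2*(2*A^2) :=
      mul_le_mul_of_nonneg_right h1 (by positivity)
    have h3 : (A-B)^2*(A+B)^2*(2*A^2) ≤ (A-B)^2*(A+B)^2*(A^2+B^2) :=
      mul_le_mul_of_nonneg_left hf2 (by positivity)
    nlinarith [h2, h3]

lemma aux_main (b b' : ℝ) (hb : -1/2 < b) (hbb : b ≤ b') :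
    (b - b') ^ 2 / (1 + 2 * b') ^ 2 ≤
      (∫ t in Set.Ioc (0:ℝ) 1,
        (Real.sqrt (2*b+1) * t ^ b - Real.sqrt (2*b'+1) * t ^ b') ^ 2) ∧
    (∫ t in Set.Ioc (0:ℝ) 1,
        (Real.sqrt (2*b+1) * t ^ b - Real.sqrt (2*b'+1) * t ^ b') ^ 2) ≤
      (b - b') ^ 2 / (1 + 2 * b) ^ 2 := by
  have hb' : -1/2 < b' := lt_of_lt_of_le hb hbb
  set A := Real.sqrt (2*b+1) with hAdef
  set B := Real.sqrt (2*b'+1) with hBdef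
  have hxpos : (0:ℝ) < 2*b+1 := by linarith
  have hypos : (0:ℝ) < 2*b'+1 := by linarith
  have hA : A^2 = 2*b+1 := Real.sq_sqrt hxpos.le
  have hB : B^2 = 2*b'+1 := Real.sq_sqrt hypos.le
  have hApos : 0 < A := Real.sqrt_pos.mpr hxpos
  have hBpos : 0 < B := Real.sqrt_pos.mpr hypos
  have hABle : A ≤ B := Real.sqrt_le_sqrt (by linarith)
  have hspos : (0:ℝ) < b + b' + 1 := by linarith
  clear_value A B
  -- compute the integral
  have key : Set.EqOn (fun t : ℝ => (A * t ^ b - B * t ^ b') ^ 2)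
      (fun t : ℝ => A^2 * t^(2*b) + B^2 * t^(2*b') - 2*A*B * t^(b+b')) (Set.Ioc 0 1) := by
    intro t ht
    have h : (0:ℝ) < t := ht.1
    simp only
    rw [show (2:ℝ)*b = b + b by ring, show (2:ℝ)*b' = b' + b' by ring,
        Real.rpow_add h, Real.rpow_add h, Real.rpow_add h]
    ring
  have i1 := (int_rpow_integ (2*b) (by linarith)).const_mul (A^2)
  have i2 := (int_rpow_integ (2*b') (by linarith)).const_mul (B^2)
  have i3 := (int_rpow_integ (b+b') (by linarith)).const_mul (2*A*B)
  have i12 : MeasureTheory.Integrable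
      (fun x : ℝ => A^2 * x^(2*b) + B^2 * x^(2*b'))
      (MeasureTheory.volume.restrict (Set.Ioc 0 1)) := i1.add i2
  have hval : (∫ t in Set.Ioc (0:ℝ) 1, (A * t ^ b - B * t ^ b') ^ 2)
      = 2 - 2*A*B/(b+b'+1) := by
    rw [MeasureTheory.setIntegral_congr_fun measurableSet_Ioc key,
      MeasureTheory.integral_sub i12 i3, MeasureTheory.integral_add i1 i2,
      MeasureTheory.integral_const_mul, MeasureTheory.integral_const_mul,
      MeasureTheory.integral_const_mul,
      int_rpow_val (2*b) (by linarith), int_rpow_val (2*b') (by linarith),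
      int_rpow_val (b+b') (by linarith), hA, hB]
    rw [mul_one_div, mul_one_div, mul_one_div, div_self (ne_of_gt hxpos),
      div_self (ne_of_gt hypos)]
    ring
  rw [hval]
  have e1 : b - b' = (A^2 - B^2)/2 := by rw [hA, hB]; ring
  have e2 : 1 + 2*b' = B^2 := by rw [hB]; ring
  have e3 : 1 + 2*b = A^2 := by rw [hA]; ring
  have e4 : 2 - 2*A*B/(b+b'+1) = 2*(A-B)^2/(A^2+B^2) := by
    have h1 : b + b' + 1 = (A^2+B^2)/2 := by linarith
    have h2 : A^2 + B^2 ≠ 0 := by positivity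
    rw [h1]
    field_simp
    ring
  rw [e1, e2, e3, e4]
  exact ineq_both A B hApos hABle

theorem stmt_1 (b b' : ℝ) (hb : -1/2 < b) (hb' : -1/2 < b') :
    (b - b') ^ 2 / (1 + 2 * max b b') ^ 2 ≤
      (∫ t in Set.Ioc (0:ℝ) 1,
        (Real.sqrt (2*b+1) * t ^ b - Real.sqrt (2*b'+1) * t ^ b') ^ 2) ∧
    (∫ t in Set.Ioc (0:ℝ) 1,
        (Real.sqrt (2*b+1) * t ^ b - Real.sqrt (2*b'+1) * t ^ b') ^ 2) ≤
      (b - b') ^ 2 / (1 + 2 * min b b') ^ 2 := by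
  rcases le_total b b' with h | h
  · rw [max_eq_right h, min_eq_left h]
    exact aux_main b b' hb h
  · rw [max_eq_left h, min_eq_right h]
    have hsym : (∫ t in Set.Ioc (0:ℝ) 1,
        (Real.sqrt (2*b+1) * t ^ b - Real.sqrt (2*b'+1) * t ^ b') ^ 2)
        = ∫ t in Set.Ioc (0:ℝ) 1,
        (Real.sqrt (2*b'+1) * t ^ b' - Real.sqrt (2*b+1) * t ^ b) ^ 2 := by
      apply MeasureTheory.integral_congr_ae
      filter_upwards with t
      ring
    rw [hsym, show (b - b')^2 = (b' - b)^2 by ring]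
    exact aux_main b' b hb' h
end

section
/- Let k ∈ ℕ and g_b be the L²((0,∞))-normalization of t^{k/2}e^{−bt} for b > 0. Then for all b, b' > 0: (b−b')²/(8·max(b,b')²) ≤ (1/2)∫₀^∞ (g_b − g_{b'})² dt ≤ (k+1)(b−b')²/(8·min(b,b')²). -/
open MeasureTheory Real

/-- The unnormalized gamma-type function `t ^ (k/2) * exp (-b*t)`. -/
noncomputable def gammaFun (k : ℕ) (b : ℝ) (t : ℝ) : ℝ :=
  t ^ ((k : ℝ)/2) * Real.exp (-b * t)

/-- Its `L²((0,∞))`-normalization. -/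
noncomputable def gNorm (k : ℕ) (b : ℝ) (t : ℝ) : ℝ :=
  gammaFun k b t / Real.sqrt (∫ u in Set.Ioi (0:ℝ), (gammaFun k b u) ^ 2)

/-!
Both `g_b` are unit vectors in `L²(0,∞)`, so `½‖g_b - g_{b'}‖² = 1 - ⟨g_b, g_{b'}⟩`.
The Gamma integral `∫₀^∞ t^k e^{-ct} dt = Γ(k+1)/c^{k+1}` gives `⟨g_b, g_{b'}⟩ = z^{k+1}`
with `z = 2√(bb')/(b+b')`, the ratio of the geometric to the arithmetic mean. Then
`z^{k+1} ≤ z` and Bernoulli's inequality give `1 - z ≤ 1 - z^{k+1} ≤ (k+1)(1 - z)`, and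
`1 - z = (b-b')² / ((√b+√b')²(b+b'))`, whose denominator lies between `8 min(b,b')²` and
`8 max(b,b')²`.
-/

lemma integral_sub_sq_eq {α : Type*} [MeasurableSpace α] {μ : Measure α} {f g : α → ℝ}
    (hff : Integrable (fun x => f x * f x) μ) (hfg : Integrable (fun x => f x * g x) μ)
    (hgg : Integrable (fun x => g x * g x) μ) :
    ∫ x, (f x - g x) ^ 2 ∂μ
      = ∫ x, f x * f x ∂μ - 2 * ∫ x, f x * g x ∂μ + ∫ x, g x * g x ∂μ := by
  have hexpand :
      (fun x => (f x - g x) ^ 2) = fun x => f x * f x - 2 * (f x * g x) + g x * g x := by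
    funext x; ring
  have hdiff : Integrable (fun x => f x * f x - 2 * (f x * g x)) μ := hff.sub (hfg.const_mul 2)
  rw [hexpand, integral_add hdiff hgg, integral_sub hff (hfg.const_mul 2), integral_const_mul]

lemma gammaFun_mul_gammaFun (k : ℕ) (a a' : ℝ) {t : ℝ} (ht : 0 < t) :
    gammaFun k a t * gammaFun k a' t = t ^ ((k + 1 : ℝ) - 1) * exp (-((a + a') * t)) := by
  rw [gammaFun, gammaFun, show (k + 1 : ℝ) - 1 = k / 2 + k / 2 by ring, rpow_add ht,
    show -((a + a') * t) = -a * t + -a' * t by ring, exp_add]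
  ring

lemma integrableOn_gammaFun_mul (k : ℕ) {a a' : ℝ} (ha : 0 < a) (ha' : 0 < a') :
    IntegrableOn (fun t => gammaFun k a t * gammaFun k a' t) (Set.Ioi 0) := by
  refine (integrableOn_rpow_mul_exp_neg_mul_rpow (s := k) (by linarith [k.cast_nonneg (α := ℝ)])
    zero_lt_one (add_pos ha ha')).congr_fun (fun t ht => ?_) measurableSet_Ioi
  simp only [gammaFun_mul_gammaFun k a a' ht, rpow_one, add_sub_cancel_right, neg_mul]

lemma integral_gammaFun_mul (k : ℕ) {a a' : ℝ} (ha : 0 < a) (ha' : 0 < a') :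
    ∫ t in Set.Ioi 0, gammaFun k a t * gammaFun k a' t = Gamma (k + 1) / (a + a') ^ (k + 1) := by
  rw [setIntegral_congr_fun measurableSet_Ioi (fun t ht => gammaFun_mul_gammaFun k a a' ht),
    integral_rpow_mul_exp_neg_mul_Ioi (by positivity) (by positivity), one_div,
    inv_rpow (by positivity),
    show (k + 1 : ℝ) = ((k + 1 : ℕ) : ℝ) by push_cast; rfl, rpow_natCast]
  ring

lemma sqrt_integral_gammaFun_sq (k : ℕ) {a : ℝ} (ha : 0 < a) :
    √(∫ t in Set.Ioi 0, gammaFun k a t ^ 2) = √(Gamma (k + 1)) / (√2 * √a) ^ (k + 1) := by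
  have hpow : (2 * a) ^ (k + 1) = ((√2 * √a) ^ (k + 1)) ^ 2 := by
    rw [← pow_mul, mul_comm (k + 1), pow_mul, mul_pow √2 √a 2, sq_sqrt zero_le_two,
      sq_sqrt ha.le]
  simp only [sq]
  rw [integral_gammaFun_mul k ha ha, ← two_mul, sqrt_div' _ (by positivity), hpow,
    sqrt_sq (by positivity)]

lemma integral_gNorm_mul (k : ℕ) {a a' : ℝ} (ha : 0 < a) (ha' : 0 < a') :
    ∫ t in Set.Ioi 0, gNorm k a t * gNorm k a' t = (2 * √a * √a' / (a + a')) ^ (k + 1) := by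
  simp only [gNorm, div_mul_div_comm]
  rw [integral_div, integral_gammaFun_mul k ha ha', sqrt_integral_gammaFun_sq k ha,
    sqrt_integral_gammaFun_sq k ha']
  have hΓ : 0 < Gamma (k + 1) := Gamma_pos_of_pos (by positivity)
  have hnorm :
      (√2 * √a) ^ (k + 1) * (√2 * √a') ^ (k + 1) = (2 * √a * √a') ^ (k + 1) := by
    rw [← mul_pow]
    congr 1
    linear_combination √a * √a' * mul_self_sqrt zero_le_two
  rw [div_mul_div_comm, mul_self_sqrt hΓ.le, hnorm, div_pow]
  field_simp

lemma integrableOn_gNorm_mul (k : ℕ) {a a' : ℝ} (ha : 0 < a) (ha' : 0 < a') :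
    IntegrableOn (fun t => gNorm k a t * gNorm k a' t) (Set.Ioi 0) := by
  simp only [gNorm, div_mul_div_comm]
  exact (integrableOn_gammaFun_mul k ha ha').div_const _

lemma half_integral_sub_gNorm_sq (k : ℕ) {b b' : ℝ} (hb : 0 < b) (hb' : 0 < b') :
    (1 / 2) * ∫ t in Set.Ioi 0, (gNorm k b t - gNorm k b' t) ^ 2
      = 1 - (2 * √b * √b' / (b + b')) ^ (k + 1) := by
  have hself : ∀ {a : ℝ}, 0 < a → 2 * √a * √a / (a + a) = 1 := fun ha => by
    rw [mul_assoc, mul_self_sqrt ha.le, ← two_mul, div_self (by positivity)]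
  rw [integral_sub_sq_eq (integrableOn_gNorm_mul k hb hb) (integrableOn_gNorm_mul k hb hb')
    (integrableOn_gNorm_mul k hb' hb'), integral_gNorm_mul k hb hb, integral_gNorm_mul k hb hb',
    integral_gNorm_mul k hb' hb', hself hb, hself hb']
  ring

lemma one_sub_two_sqrt_mul_div_add {b b' : ℝ} (hb : 0 < b) (hb' : 0 < b') :
    1 - 2 * √b * √b' / (b + b') = (b - b') ^ 2 / ((√b + √b') ^ 2 * (b + b')) := by
  have hx := sqrt_pos.2 hb
  have hy := sqrt_pos.2 hb'
  set x := √b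
  set y := √b'
  rw [← sq_sqrt hb.le, ← sq_sqrt hb'.le]
  field_simp
  ring

lemma sq_sub_div_le_one_sub_two_sqrt_mul_div_add {b b' : ℝ} (hb : 0 < b) (hb' : 0 < b') :
    (b - b') ^ 2 / (8 * max b b' ^ 2) ≤ 1 - 2 * √b * √b' / (b + b') := by
  rw [one_sub_two_sqrt_mul_div_add hb hb']
  refine div_le_div_of_nonneg_left (sq_nonneg _) (by positivity) ?_
  have hsum : (√b + √b') ^ 2 ≤ 4 * max b b' := by
    nlinarith [sq_nonneg (√b - √b'), sq_sqrt hb.le, sq_sqrt hb'.le, le_max_left b b',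
      le_max_right b b']
  have hadd : b + b' ≤ 2 * max b b' := by linarith [le_max_left b b', le_max_right b b']
  calc (√b + √b') ^ 2 * (b + b') ≤ (4 * max b b') * (2 * max b b') := by gcongr
    _ = 8 * max b b' ^ 2 := by ring

lemma one_sub_two_sqrt_mul_div_add_le_sq_sub_div {b b' : ℝ} (hb : 0 < b) (hb' : 0 < b') :
    1 - 2 * √b * √b' / (b + b') ≤ (b - b') ^ 2 / (8 * min b b' ^ 2) := by
  rw [one_sub_two_sqrt_mul_div_add hb hb']
  refine div_le_div_of_nonneg_left (sq_nonneg _) (by positivity) ?_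
  have hsum : 4 * min b b' ≤ (√b + √b') ^ 2 := by
    have h := add_le_add (sqrt_le_sqrt (min_le_left b b')) (sqrt_le_sqrt (min_le_right b b'))
    nlinarith [sq_sqrt (le_min hb.le hb'.le), mul_self_le_mul_self (by positivity) h]
  have hadd : 2 * min b b' ≤ b + b' := by linarith [min_le_left b b', min_le_right b b']
  calc 8 * min b b' ^ 2 = (4 * min b b') * (2 * min b b') := by ring
    _ ≤ (√b + √b') ^ 2 * (b + b') := by gcongr

theorem stmt_3 (k : ℕ) (b b' : ℝ) (hb : 0 < b) (hb' : 0 < b') :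
    (b - b') ^ 2 / (8 * (max b b') ^ 2) ≤
      (1/2) * (∫ t in Set.Ioi (0:ℝ), (gNorm k b t - gNorm k b' t) ^ 2) ∧
    (1/2) * (∫ t in Set.Ioi (0:ℝ), (gNorm k b t - gNorm k b' t) ^ 2) ≤
      (k + 1) * (b - b') ^ 2 / (8 * (min b b') ^ 2) := by
  rw [half_integral_sub_gNorm_sq k hb hb']
  set z := 2 * √b * √b' / (b + b')
  have hz0 : 0 ≤ z := by positivity
  have hz1 : z ≤ 1 := by
    rw [div_le_one (by positivity)]
    simpa only [sq_sqrt hb.le, sq_sqrt hb'.le] using two_mul_le_add_sq √b √b'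
  constructor
  · calc (b - b') ^ 2 / (8 * max b b' ^ 2) ≤ 1 - z :=
          sq_sub_div_le_one_sub_two_sqrt_mul_div_add hb hb'
      _ ≤ 1 - z ^ (k + 1) := by gcongr; exact pow_le_of_le_one hz0 hz1 k.succ_ne_zero
  · calc 1 - z ^ (k + 1) ≤ (k + 1) * (1 - z) := by
          have bernoulli := one_add_mul_sub_le_pow (by linarith : (-1 : ℝ) ≤ z) (k + 1)
          push_cast at bernoulli
          linarith
      _ ≤ (k + 1) * ((b - b') ^ 2 / (8 * min b b' ^ 2)) := by
          gcongr; exact one_sub_two_sqrt_mul_div_add_le_sq_sub_div hb hb'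
      _ = (k + 1) * (b - b') ^ 2 / (8 * min b b' ^ 2) := by ring
end

section
/- Let r₁, r₂ > 0 and let θ = (θ₁,θ₂), θ' = (θ₁',θ₂') ∈ [−r₁,r₁] × [−1/2 + 1/r₂, ∞). Define f_θ(t) = θ₁ t^{θ₂} on (0,1]. Then the L²((0,1])-distance between f_θ and f_{θ'} satisfies ‖f_θ − f_{θ'}‖₂ ≤ r₂^{1/2}|θ₁ − θ₁'| + √2·r₁·r₂^{3/2}|θ₂ − θ₂'|. -/
/-!
Write `θ₁ t^θ₂ - θ₁' t^θ₂' = (θ₁ - θ₁') t^θ₂ + θ₁' (t^θ₂ - t^θ₂')` and use `(x + y)² ≤ 2x² + 2y²`.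
The first square integrates to `(2θ₂ + 1)⁻¹ ≤ r₂ / 2`. For the second, convexity of `a ↦ t^a` gives
`|t^a - t^b| ≤ |a - b| (-log t) t^(min a b)`, and `-log t · t^p ≤ 1 / (e p) < 1 / (2p)` trades the
logarithm for a small loss `p = 1 / (2 r₂)` in the exponent; the margin `1 / r₂` in the constraint on
`θ₂` keeps the resulting power of `t` integrable, with integral at most `r₂`.
-/

open MeasureTheory Real Set

lemma integrableOn_rpow_Ioc_zero_one {s : ℝ} (hs : -1 < s) :
    IntegrableOn (fun t : ℝ => t ^ s) (Ioc 0 1) :=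
  (intervalIntegral.intervalIntegrable_rpow' hs).1

lemma integral_rpow_Ioc_zero_one {s : ℝ} (hs : -1 < s) :
    ∫ t in Ioc (0 : ℝ) 1, t ^ s = (s + 1)⁻¹ := by
  rw [← intervalIntegral.integral_of_le zero_le_one, integral_rpow (Or.inl hs), one_rpow,
    zero_rpow (by linarith), sub_zero, one_div]

lemma integrableOn_sq_rpow_sub_rpow {a b : ℝ} (ha : -1 / 2 < a) (hb : -1 / 2 < b) :
    IntegrableOn (fun t : ℝ => (t ^ a - t ^ b) ^ 2) (Ioc 0 1) := by
  have hexp : EqOn (fun t : ℝ => t ^ (2 * a) - 2 * t ^ (a + b) + t ^ (2 * b))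
      (fun t => (t ^ a - t ^ b) ^ 2) (Ioc 0 1) := fun t ht => by
    simp only [two_mul, rpow_add ht.1]; ring
  refine IntegrableOn.congr_fun ?_ hexp measurableSet_Ioc
  exact ((integrableOn_rpow_Ioc_zero_one (by linarith)).sub
    ((integrableOn_rpow_Ioc_zero_one (by linarith)).const_mul 2)).add
    (integrableOn_rpow_Ioc_zero_one (by linarith))

lemma rpow_sub_rpow_le_mul_neg_log {t : ℝ} (a b : ℝ) (ht : 0 < t) :
    t ^ b - t ^ a ≤ (a - b) * -log t * t ^ b := by
  have h := add_one_le_exp ((a - b) * log t)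
  rw [mul_comm, ← rpow_def_of_pos ht, rpow_sub ht] at h
  have hb := rpow_pos_of_pos ht b
  rw [le_div_iff₀ hb] at h
  nlinarith

lemma abs_rpow_sub_rpow_le {t : ℝ} (a b : ℝ) (ht₀ : 0 < t) (ht₁ : t ≤ 1) :
    |t ^ a - t ^ b| ≤ |a - b| * -log t * t ^ min a b := by
  wlog hab : b ≤ a generalizing a b
  · rw [abs_sub_comm, abs_sub_comm a, min_comm]
    exact this b a (le_of_not_ge hab)
  rw [abs_of_nonpos (sub_nonpos.2 (rpow_le_rpow_of_exponent_ge ht₀ ht₁ hab)),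
    abs_of_nonneg (sub_nonneg.2 hab), min_eq_right hab, neg_sub]
  exact rpow_sub_rpow_le_mul_neg_log a b ht₀

lemma neg_log_mul_rpow_le {t p : ℝ} (ht : 0 < t) (hp : 0 < p) :
    -log t * t ^ p ≤ exp (-1) / p := by
  have h := mul_exp_neg_le_exp_neg_one (-(p * log t))
  rw [neg_neg, mul_comm p, ← rpow_def_of_pos ht] at h
  rw [le_div_iff₀ hp]
  linarith

lemma abs_rpow_sub_rpow_le_div_mul_rpow {t p : ℝ} (a b : ℝ) (ht₀ : 0 < t) (ht₁ : t ≤ 1)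
    (hp : 0 < p) : |t ^ a - t ^ b| ≤ |a - b| / (2 * p) * t ^ (min a b - p) := by
  have hlog : -log t * t ^ p ≤ 1 / (2 * p) := by
    calc -log t * t ^ p ≤ exp (-1) / p := neg_log_mul_rpow_le ht₀ hp
      _ ≤ 1 / 2 / p := by gcongr; exact exp_neg_one_lt_half.le
      _ = 1 / (2 * p) := by rw [div_div]
  calc |t ^ a - t ^ b| ≤ |a - b| * -log t * t ^ min a b := abs_rpow_sub_rpow_le a b ht₀ ht₁
    _ = |a - b| * (-log t * t ^ p) * t ^ (min a b - p) := by
      rw [rpow_sub ht₀]; field_simp [(rpow_pos_of_pos ht₀ p).ne']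
    _ ≤ |a - b| * (1 / (2 * p)) * t ^ (min a b - p) := by gcongr
    _ = |a - b| / (2 * p) * t ^ (min a b - p) := by rw [mul_one_div]

lemma integral_sq_rpow_sub_rpow_le {r a b : ℝ} (hr : 0 < r) (ha : -1 / 2 + 1 / r ≤ a)
    (hb : -1 / 2 + 1 / r ≤ b) :
    ∫ t in Ioc (0 : ℝ) 1, (t ^ a - t ^ b) ^ 2 ≤ r ^ 3 * (a - b) ^ 2 := by
  set s := 2 * min a b - 1 / r
  have hmin : -1 / 2 + 1 / r ≤ min a b := le_min ha hb
  have hs : 1 / r ≤ s + 1 := by linarith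
  have hs₀ : -1 < s := by linarith [one_div_pos.2 hr]
  have hpt : ∀ t ∈ Ioc (0 : ℝ) 1, (t ^ a - t ^ b) ^ 2 ≤ r ^ 2 * (a - b) ^ 2 * t ^ s := by
    rintro t ⟨ht₀, ht₁⟩
    have h := abs_rpow_sub_rpow_le_div_mul_rpow a b ht₀ ht₁ (show 0 < 1 / (2 * r) by positivity)
    have hsq : t ^ s = (t ^ (min a b - 1 / (2 * r))) ^ 2 := by
      rw [← rpow_natCast, ← rpow_mul ht₀.le]; congr 1; simp only [s]; field_simp; ring
    rw [hsq, ← sq_abs]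
    calc |t ^ a - t ^ b| ^ 2 ≤ (|a - b| / (2 * (1 / (2 * r))) * t ^ (min a b - 1 / (2 * r))) ^ 2 :=
          pow_le_pow_left₀ (abs_nonneg _) h 2
      _ = _ := by field_simp; rw [sq_abs]
  calc ∫ t in Ioc (0 : ℝ) 1, (t ^ a - t ^ b) ^ 2
      ≤ ∫ t in Ioc (0 : ℝ) 1, r ^ 2 * (a - b) ^ 2 * t ^ s :=
        integral_mono_of_nonneg (.of_forall fun _ => sq_nonneg _)
          ((integrableOn_rpow_Ioc_zero_one hs₀).const_mul _)
          ((ae_restrict_mem measurableSet_Ioc).mono hpt)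
    _ = r ^ 2 * (a - b) ^ 2 * (s + 1)⁻¹ := by
      rw [integral_const_mul, integral_rpow_Ioc_zero_one hs₀]
    _ ≤ r ^ 2 * (a - b) ^ 2 * r := by
      gcongr
      rwa [inv_le_comm₀ (by linarith [one_div_pos.2 hr]) hr, ← one_div]
    _ = r ^ 3 * (a - b) ^ 2 := by ring

lemma integral_sq_mul_rpow_sub_mul_rpow_le {r₁ r₂ θ₁ θ₂ θ₁' θ₂' : ℝ} (hr₂ : 0 < r₂)
    (h₁' : |θ₁'| ≤ r₁) (h₂ : -1 / 2 + 1 / r₂ ≤ θ₂) (h₂' : -1 / 2 + 1 / r₂ ≤ θ₂') :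
    ∫ t in Ioc (0 : ℝ) 1, (θ₁ * t ^ θ₂ - θ₁' * t ^ θ₂') ^ 2
      ≤ r₂ * (θ₁ - θ₁') ^ 2 + 2 * r₁ ^ 2 * r₂ ^ 3 * (θ₂ - θ₂') ^ 2 := by
  have hr₂' : 0 < 1 / r₂ := one_div_pos.2 hr₂
  have hpt : ∀ t ∈ Ioc (0 : ℝ) 1, (θ₁ * t ^ θ₂ - θ₁' * t ^ θ₂') ^ 2
      ≤ 2 * (θ₁ - θ₁') ^ 2 * t ^ (2 * θ₂) + 2 * r₁ ^ 2 * (t ^ θ₂ - t ^ θ₂') ^ 2 := by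
    rintro t ⟨ht₀, -⟩
    have hθ₁' : θ₁' ^ 2 ≤ r₁ ^ 2 := sq_le_sq' (abs_le.1 h₁').1 (abs_le.1 h₁').2
    calc (θ₁ * t ^ θ₂ - θ₁' * t ^ θ₂') ^ 2
        = ((θ₁ - θ₁') * t ^ θ₂ + θ₁' * (t ^ θ₂ - t ^ θ₂')) ^ 2 := by ring
      _ ≤ 2 * (((θ₁ - θ₁') * t ^ θ₂) ^ 2 + (θ₁' * (t ^ θ₂ - t ^ θ₂')) ^ 2) := add_sq_le
      _ = 2 * (θ₁ - θ₁') ^ 2 * t ^ (2 * θ₂) + 2 * θ₁' ^ 2 * (t ^ θ₂ - t ^ θ₂') ^ 2 := by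
        rw [two_mul θ₂, rpow_add ht₀]; ring
      _ ≤ _ := by gcongr
  have hint₁ := integrableOn_rpow_Ioc_zero_one (s := 2 * θ₂) (by linarith)
  have hint₂ := integrableOn_sq_rpow_sub_rpow (a := θ₂) (b := θ₂') (by linarith) (by linarith)
  have hpow : (2 * θ₂ + 1)⁻¹ ≤ r₂ / 2 := by
    rw [inv_le_comm₀ (by linarith) (by positivity), inv_div, div_eq_mul_one_div]; linarith
  calc ∫ t in Ioc (0 : ℝ) 1, (θ₁ * t ^ θ₂ - θ₁' * t ^ θ₂') ^ 2
      ≤ ∫ t in Ioc (0 : ℝ) 1,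
          (2 * (θ₁ - θ₁') ^ 2 * t ^ (2 * θ₂) + 2 * r₁ ^ 2 * (t ^ θ₂ - t ^ θ₂') ^ 2) :=
        integral_mono_of_nonneg (.of_forall fun _ => sq_nonneg _)
          ((hint₁.const_mul _).add (hint₂.const_mul _))
          ((ae_restrict_mem measurableSet_Ioc).mono hpt)
    _ = 2 * (θ₁ - θ₁') ^ 2 * (2 * θ₂ + 1)⁻¹
          + 2 * r₁ ^ 2 * ∫ t in Ioc (0 : ℝ) 1, (t ^ θ₂ - t ^ θ₂') ^ 2 := by
      rw [integral_add (hint₁.const_mul _) (hint₂.const_mul _), integral_const_mul,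
        integral_const_mul, integral_rpow_Ioc_zero_one (by linarith)]
    _ ≤ 2 * (θ₁ - θ₁') ^ 2 * (r₂ / 2) + 2 * r₁ ^ 2 * (r₂ ^ 3 * (θ₂ - θ₂') ^ 2) := by
      gcongr
      exact integral_sq_rpow_sub_rpow_le hr₂ h₂ h₂'
    _ = r₂ * (θ₁ - θ₁') ^ 2 + 2 * r₁ ^ 2 * r₂ ^ 3 * (θ₂ - θ₂') ^ 2 := by ring

theorem stmt_6_general (r₁ r₂ θ₁ θ₂ θ₁' θ₂' : ℝ) (hr₂ : 0 < r₂)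
    (h₁' : θ₁' ∈ Set.Icc (-r₁) r₁)
    (h₂ : -1/2 + 1/r₂ ≤ θ₂) (h₂' : -1/2 + 1/r₂ ≤ θ₂') :
    Real.sqrt (∫ t in Set.Ioc (0:ℝ) 1, (θ₁ * t ^ θ₂ - θ₁' * t ^ θ₂') ^ 2)
      ≤ r₂ ^ ((1:ℝ)/2) * |θ₁ - θ₁'| + Real.sqrt 2 * r₁ * r₂ ^ ((3:ℝ)/2) * |θ₂ - θ₂'| := by
  have hr₁ : 0 ≤ r₁ := by linarith [h₁'.1, h₁'.2]
  set A := r₂ ^ ((1:ℝ)/2) * |θ₁ - θ₁'|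
  set B := Real.sqrt 2 * r₁ * r₂ ^ ((3:ℝ)/2) * |θ₂ - θ₂'|
  have hA : A ^ 2 = r₂ * (θ₁ - θ₁') ^ 2 := by
    rw [mul_pow, sq_abs, ← rpow_natCast, ← rpow_mul hr₂.le]; norm_num
  have hB : B ^ 2 = 2 * r₁ ^ 2 * r₂ ^ 3 * (θ₂ - θ₂') ^ 2 := by
    rw [mul_pow, mul_pow, mul_pow, sq_abs, sq_sqrt zero_le_two, ← rpow_natCast (r₂ ^ _),
      ← rpow_mul hr₂.le]; norm_num
  have hAB : 0 ≤ A * B := by positivity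
  rw [sqrt_le_left (by positivity)]
  calc _ ≤ r₂ * (θ₁ - θ₁') ^ 2 + 2 * r₁ ^ 2 * r₂ ^ 3 * (θ₂ - θ₂') ^ 2 :=
        integral_sq_mul_rpow_sub_mul_rpow_le hr₂ (abs_le.2 h₁') h₂ h₂'
    _ ≤ (A + B) ^ 2 := by nlinarith

theorem stmt_6 (r₁ r₂ θ₁ θ₂ θ₁' θ₂' : ℝ) (hr₁ : 0 < r₁) (hr₂ : 0 < r₂)
    (h₁ : θ₁ ∈ Set.Icc (-r₁) r₁) (h₁' : θ₁' ∈ Set.Icc (-r₁) r₁)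
    (h₂ : -1/2 + 1/r₂ ≤ θ₂) (h₂' : -1/2 + 1/r₂ ≤ θ₂') :
    Real.sqrt (∫ t in Set.Ioc (0:ℝ) 1, (θ₁ * t ^ θ₂ - θ₁' * t ^ θ₂') ^ 2)
      ≤ r₂ ^ ((1:ℝ)/2) * |θ₁ - θ₁'| + Real.sqrt 2 * r₁ * r₂ ^ ((3:ℝ)/2) * |θ₂ - θ₂'| :=
  stmt_6_general r₁ r₂ θ₁ θ₂ θ₁' θ₂' hr₂ h₁' h₂ h₂'
end
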